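/- Let p be an odd prime, F a finite field of characteristic p with canonical ring homomorphism φ : ZMod p → F, let v ≥ 1, n = v + 1, and let Γ be a simple graph on Fin v with Seidel matrix Σ over F; set S = [[0, 𝟙ᵀ],[𝟙, Σ]] ∈ F^{n×n}. Suppose k, λ, μ ∈ ZMod p are such that the adjacency matrix A of Γ over ZMod p satisfies A² = μ·J + (λ−μ)·A + (k−μ)·I, that k = 2μ and (v : ZMod p) = 3k − 2λ − 1, and that δ ∈ F satisfies δ² = φ((λ−μ)² + 4(k−μ)). Then for a, c ∈ F, the equation (S + a·I)² = c·(S + a·I) holds if and only if there exists ε ∈ {1, −1} with a = φ(λ − μ + 1) + ε·δ and c = 2ε·δ. -/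
import Mathlib

open Matrix Finset

/-- The Seidel adjacency matrix `Σ = J - 2A - I` of a simple graph, over a ring `R`. -/
def seidel {v : ℕ} (R : Type*) [Ring R] (Γ : SimpleGraph (Fin v)) [DecidableRel Γ.Adj] :
    Matrix (Fin v) (Fin v) R :=
  Matrix.of (fun _ _ => (1 : R)) - 2 • Γ.adjMatrix R - 1

/-- The bordered matrix `S = [[0, 𝟙ᵀ],[𝟙, Σ]]` obtained from a `v × v` matrix `Σ`. -/
def border {v : ℕ} {R : Type*} [Zero R] [One R]
    (S : Matrix (Fin v) (Fin v) R) : Matrix (Fin (v + 1)) (Fin (v + 1)) R :=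
  Matrix.of fun i j =>
    if hi : i = 0 then (if j = 0 then (0 : R) else 1)
    else if hj : j = 0 then 1 else S (i.pred hi) (j.pred hj)

section aux
variable {p : ℕ} {F : Type} [Field F] (φ : ZMod p →+* F)
variable {v : ℕ} (Γ : SimpleGraph (Fin v)) [DecidableRel Γ.Adj]
variable (k l m : ZMod p)

lemma adj_rowsum
    (hA : Γ.adjMatrix (ZMod p) * Γ.adjMatrix (ZMod p) =
      m • Matrix.of (fun _ _ => (1 : ZMod p)) + (l - m) • Γ.adjMatrix (ZMod p)
        + (k - m) • (1 : Matrix (Fin v) (Fin v) (ZMod p)))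
    (i : Fin v) : ∑ j, Γ.adjMatrix (ZMod p) i j = k := by
  have h1 := congrFun (congrFun hA i) i
  rw [mul_apply] at h1
  have h2 : ∀ j, Γ.adjMatrix (ZMod p) i j * Γ.adjMatrix (ZMod p) j i
      = Γ.adjMatrix (ZMod p) i j := by
    intro j
    by_cases h : Γ.Adj i j
    · simp [h, h.symm]
    · simp [h]
  simp only [h2] at h1
  simp only [Matrix.add_apply, Matrix.smul_apply, Matrix.of_apply, smul_eq_mul,
    Matrix.one_apply_eq, SimpleGraph.adjMatrix_apply, SimpleGraph.irrefl, if_false] at h1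
  simp only [SimpleGraph.adjMatrix_apply]
  rw [h1]; ring

lemma adjF_apply (i j : Fin v) :
    Γ.adjMatrix F i j = φ (Γ.adjMatrix (ZMod p) i j) := by
  simp [apply_ite φ]

variable (hrow : ∀ i, ∑ j, Γ.adjMatrix (ZMod p) i j = k)

include hrow in
lemma adjF_rowsum (i : Fin v) : ∑ j, Γ.adjMatrix F i j = φ k := by
  simp_rw [adjF_apply φ Γ, ← map_sum, hrow]

include hrow in
lemma adjF_colsum (j : Fin v) : ∑ i, Γ.adjMatrix F i j = φ k := by
  have : ∀ i, Γ.adjMatrix F i j = Γ.adjMatrix F j i := by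
    intro i; simp [SimpleGraph.adj_comm]
  simp_rw [this]
  exact adjF_rowsum φ Γ k hrow j

include hrow in
lemma JB_eq : (Matrix.of fun _ _ => (1:F)) * Γ.adjMatrix F
    = φ k • Matrix.of fun _ _ => (1:F) := by
  ext i j
  rw [mul_apply]
  simp only [Matrix.of_apply, one_mul, Matrix.smul_apply, smul_eq_mul, mul_one]
  exact adjF_colsum φ Γ k hrow j

include hrow in
lemma BJ_eq : Γ.adjMatrix F * (Matrix.of fun _ _ => (1:F))
    = φ k • Matrix.of fun _ _ => (1:F) := by
  ext i j
  rw [mul_apply]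
  simp only [Matrix.of_apply, mul_one, Matrix.smul_apply, smul_eq_mul]
  exact adjF_rowsum φ Γ k hrow i

lemma JJ_eq : ((Matrix.of fun _ _ => (1:F)) : Matrix (Fin v) (Fin v) F) * (Matrix.of fun _ _ => (1:F))
    = ((v : F)) • Matrix.of fun _ _ => (1:F) := by
  ext i j
  simp [mul_apply]

lemma adjF_sq
    (hA : Γ.adjMatrix (ZMod p) * Γ.adjMatrix (ZMod p) =
      m • Matrix.of (fun _ _ => (1 : ZMod p)) + (l - m) • Γ.adjMatrix (ZMod p)
        + (k - m) • (1 : Matrix (Fin v) (Fin v) (ZMod p))) :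
    Γ.adjMatrix F * Γ.adjMatrix F =
      φ m • Matrix.of (fun _ _ => (1 : F)) + φ (l - m) • Γ.adjMatrix F
        + φ (k - m) • (1 : Matrix (Fin v) (Fin v) F) := by
  ext i j
  have h1 : (Γ.adjMatrix F * Γ.adjMatrix F) i j
      = φ ((Γ.adjMatrix (ZMod p) * Γ.adjMatrix (ZMod p)) i j) := by
    rw [mul_apply, mul_apply, map_sum]
    simp_rw [adjF_apply φ Γ, _root_.map_mul]
  rw [h1, hA]
  simp [Matrix.add_apply, Matrix.one_apply, adjF_apply φ Γ, apply_ite φ, mul_comm]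

lemma seidel_sq
    (hJB : (Matrix.of fun _ _ => (1:F)) * Γ.adjMatrix F = φ k • Matrix.of fun _ _ => (1:F))
    (hBJ : Γ.adjMatrix F * (Matrix.of fun _ _ => (1:F)) = φ k • Matrix.of fun _ _ => (1:F))
    (hB2 : Γ.adjMatrix F * Γ.adjMatrix F =
      φ m • Matrix.of (fun _ _ => (1 : F)) + φ (l - m) • Γ.adjMatrix F
        + φ (k - m) • (1 : Matrix (Fin v) (Fin v) F))
    (hk : k = 2 * m) (hv' : (v : ZMod p) = 3 * k - 2 * l - 1) :
    (Matrix.of fun _ _ => (1:F)) + seidel F Γ * seidel F Γ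
      = (-2 * φ (l - m + 1)) • seidel F Γ
        + φ (4 * (k - m) - 2 * (l - m) - 1) • (1 : Matrix (Fin v) (Fin v) F) := by
  have hJJ := JJ_eq (F := F) (v := v)
  have hvF : ((v : ℕ) : F) = φ ((3 : ZMod p) * k - 2 * l - 1) := by
    rw [← hv', map_natCast]
  subst hk
  unfold seidel
  rw [sub_mul, sub_mul, mul_sub, mul_sub, mul_sub, mul_sub]
  simp only [smul_mul_assoc, mul_smul_comm, one_mul, mul_one]
  rw [hJJ, hJB, hBJ, hB2, hvF]
  simp only [map_sub, map_add, _root_.map_mul, _root_.map_one, map_ofNat, map_neg]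
  match_scalars <;> ring

lemma seidel_apply (i j : Fin v) :
    seidel F Γ i j = 1 - 2 * Γ.adjMatrix F i j - (if i = j then 1 else 0) := by
  simp only [seidel, Matrix.sub_apply, Matrix.smul_apply, Matrix.of_apply, Matrix.one_apply]
  simp only [nsmul_eq_mul, Nat.cast_ofNat]

lemma seidel_rowsum (hrowF : ∀ i, ∑ j, Γ.adjMatrix F i j = φ k)
    (hk : k = 2 * m) (hv' : (v : ZMod p) = 3 * k - 2 * l - 1) (i : Fin v) :
    ∑ j, seidel F Γ i j = -2 * φ (l - m + 1) := by
  have hvF : ((v : ℕ) : F) = φ ((3 : ZMod p) * k - 2 * l - 1) := by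
    rw [← hv', map_natCast]
  simp_rw [seidel_apply]
  rw [Finset.sum_sub_distrib, Finset.sum_sub_distrib, Finset.sum_const, ← Finset.mul_sum,
    hrowF, Finset.sum_ite_eq Finset.univ i (fun _ => (1:F)), if_pos (Finset.mem_univ i)]
  subst hk
  simp only [card_univ, Fintype.card_fin, nsmul_eq_mul, hvF]
  simp only [map_sub, map_add, _root_.map_mul, _root_.map_one, map_ofNat]
  ring

lemma seidel_colsum (hrowF : ∀ i, ∑ j, Γ.adjMatrix F i j = φ k)
    (hk : k = 2 * m) (hv' : (v : ZMod p) = 3 * k - 2 * l - 1) (j : Fin v) :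
    ∑ i, seidel F Γ i j = -2 * φ (l - m + 1) := by
  have hsymm : ∀ i, seidel F Γ i j = seidel F Γ j i := by
    intro i
    simp [seidel_apply, SimpleGraph.adj_comm, eq_comm]
  simp_rw [hsymm]
  exact seidel_rowsum φ Γ k l m hrowF hk hv' j

variable {R : Type*} [Zero R] [One R] (M : Matrix (Fin v) (Fin v) R)

@[simp] lemma border_zero_zero : border M 0 0 = 0 := rfl
@[simp] lemma border_zero_succ (j : Fin v) : border M 0 j.succ = 1 := by
  simp [border, Fin.succ_ne_zero]
@[simp] lemma border_succ_zero (i : Fin v) : border M i.succ 0 = 1 := by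
  simp [border, Fin.succ_ne_zero]
@[simp] lemma border_succ_succ (i j : Fin v) : border M i.succ j.succ = M i j := by
  simp [border, Fin.succ_ne_zero]

lemma border_sq
    (hrowS : ∀ i, ∑ j, seidel F Γ i j = -2 * φ (l - m + 1))
    (hcolS : ∀ j, ∑ i, seidel F Γ i j = -2 * φ (l - m + 1))
    (hL2 : (Matrix.of fun _ _ => (1:F)) + seidel F Γ * seidel F Γ
      = (-2 * φ (l - m + 1)) • seidel F Γ
        + φ (4 * (k - m) - 2 * (l - m) - 1) • (1 : Matrix (Fin v) (Fin v) F))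
    (hvγ : ((v : ℕ) : F) = φ (4 * (k - m) - 2 * (l - m) - 1)) :
    border (seidel F Γ) * border (seidel F Γ)
      = (-2 * φ (l - m + 1)) • border (seidel F Γ)
        + φ (4 * (k - m) - 2 * (l - m) - 1) • (1 : Matrix (Fin (v+1)) (Fin (v+1)) F) := by
  ext i j
  rw [Matrix.mul_apply, Fin.sum_univ_succ]
  simp only [Matrix.add_apply, Matrix.smul_apply, smul_eq_mul]
  induction i using Fin.cases with
  | zero =>
    induction j using Fin.cases with
    | zero =>
      simp [Matrix.one_apply, hvγ]
    | succ j' =>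
      simp only [border_zero_zero, border_zero_succ, zero_mul, one_mul, zero_add,
        Matrix.one_apply_ne (Fin.succ_ne_zero j').symm, mul_zero, add_zero, mul_one,
        border_succ_succ]
      exact hcolS j'
  | succ i' =>
    induction j using Fin.cases with
    | zero =>
      simp only [border_succ_zero, border_zero_zero, mul_zero, zero_add, border_succ_succ,
        mul_one, Matrix.one_apply_ne (Fin.succ_ne_zero i'), add_zero]
      exact hrowS i'
    | succ j' =>
      have h := congrFun (congrFun hL2 i') j'
      simp only [Matrix.add_apply, Matrix.smul_apply, Matrix.of_apply, smul_eq_mul] at h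
      simp only [border_succ_zero, border_zero_succ, one_mul, border_succ_succ]
      rw [show ((1 : Matrix (Fin (v+1)) (Fin (v+1)) F)) i'.succ j'.succ
          = (1 : Matrix (Fin v) (Fin v) F) i' j' by
        simp [Matrix.one_apply, Fin.succ_inj]]
      rw [← Matrix.mul_apply]
      exact h

end aux

/-- Given a `(v,k,λ,μ)`-SRG_p with `k = 2μ`, `v ≡ 3k - 2λ - 1`, and `δ² = (λ-μ)² + 4(k-μ)`
in `F`, the bordered Seidel matrix `S` satisfies `(S+aI)² = c(S+aI)` iff
`a = λ - μ + 1 + εδ` and `c = 2εδ` for some sign `ε = ±1`. -/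
theorem stmt_9 (p : ℕ) (hp : p.Prime) (hodd : Odd p)
    (F : Type) [Field F] [Fintype F] [CharP F p] (φ : ZMod p →+* F)
    (v : ℕ) (hv : 1 ≤ v) (Γ : SimpleGraph (Fin v)) [DecidableRel Γ.Adj]
    (k l m : ZMod p)
    (hA : Γ.adjMatrix (ZMod p) * Γ.adjMatrix (ZMod p) =
      m • Matrix.of (fun _ _ => (1 : ZMod p)) + (l - m) • Γ.adjMatrix (ZMod p)
        + (k - m) • (1 : Matrix (Fin v) (Fin v) (ZMod p)))
    (hk : k = 2 * m) (hv' : (v : ZMod p) = 3 * k - 2 * l - 1)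
    (δ : F) (hδ : δ ^ 2 = φ ((l - m) ^ 2 + 4 * (k - m)))
    (a c : F) :
    (border (seidel F Γ) + a • 1) * (border (seidel F Γ) + a • 1)
        = c • (border (seidel F Γ) + a • 1) ↔
    ∃ ε : F, (ε = 1 ∨ ε = -1) ∧ a = φ (l - m + 1) + ε * δ ∧ c = 2 * ε * δ := by
  set S := border (seidel F Γ) with hS
  -- main identity
  have hrowA := adj_rowsum Γ k l m hA
  have hrowF := adjF_rowsum φ Γ k hrowA
  have hMAIN : S * S = (-2 * φ (l - m + 1)) • S
      + φ (4 * (k - m) - 2 * (l - m) - 1) • (1 : Matrix (Fin (v+1)) (Fin (v+1)) F) := by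
    have hvγ : ((v : ℕ) : F) = φ (4 * (k - m) - 2 * (l - m) - 1) := by
      rw [← map_natCast φ v, hv']
      exact congrArg φ (by rw [hk]; ring)
    exact border_sq φ Γ k l m
      (seidel_rowsum φ Γ k l m hrowF hk hv')
      (seidel_colsum φ Γ k l m hrowF hk hv')
      (seidel_sq φ Γ k l m (JB_eq φ Γ k hrowA) (BJ_eq φ Γ k hrowA)
        (adjF_sq φ Γ k l m hA) hk hv') hvγ
  have expand : (S + a • 1) * (S + a • 1)
      = S * S + (2 * a) • S + (a * a) • (1 : Matrix (Fin (v+1)) (Fin (v+1)) F) := by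
    rw [add_mul, mul_add, mul_add]
    simp only [smul_mul_assoc, mul_smul_comm, mul_one, one_mul, smul_smul]
    module
  have hRHS : c • (S + a • 1) = c • S + (c * a) • (1 : Matrix (Fin (v+1)) (Fin (v+1)) F) := by
    rw [smul_add, smul_smul]
  have hδ2 : δ ^ 2 = φ (4 * (k - m) - 2 * (l - m) - 1) + φ (l - m + 1) ^ 2 := by
    rw [hδ]
    simp only [map_sub, map_add, _root_.map_mul, _root_.map_one, map_ofNat, map_pow]
    ring
  constructor
  · intro H
    rw [expand, hMAIN, hRHS] at H
    have i0 : Fin v := ⟨0, hv⟩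
    have e1 := congrFun (congrFun H 0) (Fin.succ ⟨0, hv⟩)
    have e2 := congrFun (congrFun H 0) 0
    simp only [hS, Matrix.add_apply, Matrix.smul_apply, smul_eq_mul, border_zero_zero,
      border_zero_succ, Matrix.one_apply_ne (Fin.succ_ne_zero (⟨0, hv⟩ : Fin v)).symm,
      Matrix.one_apply_eq, mul_zero, mul_one, add_zero, zero_add] at e1 e2
    -- e1 : -2 * φ (l-m+1) + 2 * a = c ; e2 : γ + a * a = c * a
    have key : (a - φ (l - m + 1) - δ) * (a - φ (l - m + 1) + δ) = 0 := by
      linear_combination (-1 : F) * hδ2 - e2 + a * e1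
    rcases mul_eq_zero.mp key with h | h
    · refine ⟨1, Or.inl rfl, by linear_combination h, by linear_combination -e1 + 2 * h⟩
    · refine ⟨-1, Or.inr rfl, by linear_combination h, by linear_combination -e1 + 2 * h⟩
  · rintro ⟨ε, hε, ha, hc⟩
    subst ha hc
    rw [expand, hMAIN, hRHS]
    rcases hε with rfl | rfl
    · match_scalars
      · ring
      · linear_combination -hδ2
    · match_scalars
      · ring
      · linear_combination -hδ2
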